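/- Let W, Q : ℝ^{m×d} → ℝ with Q ≤ W, Q rank-one convex (convex along rank-one lines), W differentiable. Suppose F₊ − F₋ = a⊗n is rank one and Q(t F₊ + (1−t) F₋) = t W(F₊) + (1−t) W(F₋) holds for all t ∈ [0,1]. Then ⟨W_F(F₊), F₊−F₋⟩ = W(F₊) − W(F₋) = ⟨W_F(F₋), F₊−F₋⟩; in particular 𝔑 = ⟨W_F(F₊) − W_F(F₋), F₊−F₋⟩ = 0 and the Maxwell driving force p* = 0. -/

import Mathlib

open Matrix

/-- Frobenius inner product of two `m × d` real matrices. -/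
noncomputable def frob {m d : ℕ} (A B : Matrix (Fin m) (Fin d) ℝ) : ℝ :=
  ∑ i, ∑ j, A i j * B i j

/-- Weierstrass excess function `W°(F,H) = W(F+H) - W(F) - ⟨P(F), H⟩`,
where `P` is the (matrix representation of the) derivative of `W`. -/
noncomputable def Wex {m d : ℕ} (W : Matrix (Fin m) (Fin d) ℝ → ℝ)
    (P : Matrix (Fin m) (Fin d) ℝ → Matrix (Fin m) (Fin d) ℝ)
    (F H : Matrix (Fin m) (Fin d) ℝ) : ℝ :=
  W (F + H) - W F - frob (P F) H

/-!
Along the rank-one segment `s ↦ F₋ + s (F₊ - F₋)`, the function `s ↦ Q(F₋ + s (F₊ - F₋))` is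
convex and affine on `[0, 1]`, so it lies above that affine function on the whole line, and so
does `W ≥ Q`. Since `W` touches this affine function at `s = 0` and `s = 1`, its directional
derivatives there must equal the slope `W(F₊) - W(F₋)`.
-/

section Frobenius

variable {m d : ℕ}

lemma frob_add_left (A B H : Matrix (Fin m) (Fin d) ℝ) :
    frob (A + B) H = frob A H + frob B H := by
  simp [frob, add_mul, Finset.sum_add_distrib]

lemma frob_sub_left (A B H : Matrix (Fin m) (Fin d) ℝ) :
    frob (A - B) H = frob A H - frob B H := by
  simp [frob, sub_mul, Finset.sum_sub_distrib]

lemma frob_smul_left (r : ℝ) (A H : Matrix (Fin m) (Fin d) ℝ) :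
    frob (r • A) H = r * frob A H := by
  simp [frob, Finset.mul_sum, mul_assoc]

end Frobenius

lemma ConvexOn.add_mul_le_of_eqOn_Icc {f : ℝ → ℝ} (hf : ConvexOn ℝ Set.univ f) {b c : ℝ}
    (heq : ∀ s ∈ Set.Icc (0 : ℝ) 1, f s = b + s * c) (s : ℝ) : b + s * c ≤ f s := by
  have h0 : f 0 = b := by simpa using heq 0 (by norm_num)
  have h1 : f 1 = b + c := by simpa using heq 1 (by norm_num)
  rcases lt_or_ge s 0 with hs | hs
  · have hslope := hf.slope_mono_adjacent (Set.mem_univ s) (Set.mem_univ 1) hs one_pos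
    rw [h0, h1, div_le_iff₀ (by linarith)] at hslope
    nlinarith
  rcases le_or_gt s 1 with hs' | hs'
  · exact (heq s ⟨hs, hs'⟩).ge
  · have hslope := hf.slope_mono_adjacent (Set.mem_univ 0) (Set.mem_univ s) one_pos hs'
    rw [h0, h1, le_div_iff₀ (by linarith)] at hslope
    nlinarith

lemma HasDerivAt.eq_of_forall_add_mul_le {g : ℝ → ℝ} {g' c : ℝ} (hg : HasDerivAt g g' 0)
    (hle : ∀ t, g 0 + t * c ≤ g t) : g' = c := by
  have hmin : IsLocalMin (fun t => g t - (g 0 + t * c)) 0 :=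
    Filter.Eventually.of_forall fun t => by simpa using hle t
  have hderiv : HasDerivAt (fun t => g t - (g 0 + t * c)) (g' - c) 0 := by
    exact hg.sub ((hasDerivAt_mul_const c).const_add (g 0))
  linarith [hmin.hasDerivAt_eq_zero hderiv]

lemma secant_le_of_rankOne_convex_minorant {m d : ℕ} {W Q : Matrix (Fin m) (Fin d) ℝ → ℝ}
    (hle : ∀ F, Q F ≤ W F)
    (hr1 : ∀ (F : Matrix (Fin m) (Fin d) ℝ) (u : Fin m → ℝ) (v : Fin d → ℝ),
      ConvexOn ℝ Set.univ (fun t : ℝ => Q (F + t • vecMulVec u v)))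
    {Fp Fm : Matrix (Fin m) (Fin d) ℝ} {a : Fin m → ℝ} {n : Fin d → ℝ}
    (hcomp : Fp - Fm = vecMulVec a n)
    (haff : ∀ t ∈ Set.Icc (0:ℝ) 1,
      Q (t • Fp + (1 - t) • Fm) = t * W Fp + (1 - t) * W Fm) (s : ℝ) :
    W Fm + s * (W Fp - W Fm) ≤ W (Fm + s • (Fp - Fm)) := by
  have hconv : ConvexOn ℝ Set.univ (fun s : ℝ => Q (Fm + s • (Fp - Fm))) := by
    simpa only [hcomp] using hr1 Fm a n
  have heq : ∀ s ∈ Set.Icc (0 : ℝ) 1, Q (Fm + s • (Fp - Fm)) = W Fm + s * (W Fp - W Fm) := by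
    intro s hs
    rw [show Fm + s • (Fp - Fm) = s • Fp + (1 - s) • Fm by module, haff s hs]
    ring
  exact (hconv.add_mul_le_of_eqOn_Icc heq s).trans (hle _)

theorem stmt7 {m d : ℕ} (W Q : Matrix (Fin m) (Fin d) ℝ → ℝ)
    (P : Matrix (Fin m) (Fin d) ℝ → Matrix (Fin m) (Fin d) ℝ)
    (hP : ∀ F H, HasDerivAt (fun t : ℝ => W (F + t • H)) (frob (P F) H) 0)
    (hle : ∀ F, Q F ≤ W F)
    (hr1 : ∀ (F : Matrix (Fin m) (Fin d) ℝ) (u : Fin m → ℝ) (v : Fin d → ℝ),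
      ConvexOn ℝ Set.univ (fun t : ℝ => Q (F + t • vecMulVec u v)))
    (Fp Fm : Matrix (Fin m) (Fin d) ℝ) (a : Fin m → ℝ) (n : Fin d → ℝ)
    (hcomp : Fp - Fm = vecMulVec a n)
    (haff : ∀ t ∈ Set.Icc (0:ℝ) 1,
      Q (t • Fp + (1 - t) • Fm) = t * W Fp + (1 - t) * W Fm) :
    frob (P Fp) (Fp - Fm) = W Fp - W Fm ∧
    frob (P Fm) (Fp - Fm) = W Fp - W Fm ∧
    frob (P Fp - P Fm) (Fp - Fm) = 0 ∧
    (W Fp - W Fm) - frob ((1/2 : ℝ) • (P Fp + P Fm)) (Fp - Fm) = 0 := by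
  have hline := secant_le_of_rankOne_convex_minorant hle hr1 hcomp haff
  have hm : frob (P Fm) (Fp - Fm) = W Fp - W Fm :=
    (hP Fm (Fp - Fm)).eq_of_forall_add_mul_le fun t => by simpa using hline t
  have hp : frob (P Fp) (Fp - Fm) = W Fp - W Fm := by
    refine (hP Fp (Fp - Fm)).eq_of_forall_add_mul_le fun t => ?_
    have := hline (1 + t)
    rw [show Fm + (1 + t) • (Fp - Fm) = Fp + t • (Fp - Fm) by module] at this
    simp only [zero_smul, add_zero]
    linarith
  refine ⟨hp, hm, ?_, ?_⟩
  · rw [frob_sub_left, hp, hm, sub_self]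
  · rw [frob_smul_left, frob_add_left, hp, hm]; ring
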